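/- Let N be a squarefree positive integer with at most K distinct prime divisors, and let f : (ℤ/Nℤ)² → ℂ be a nonzero function supported in a set E ⊆ (ℤ/Nℤ)² whose Fourier transform f̂ is supported in the parabola Σ = {(t, t²) : t ∈ ℤ/Nℤ}. Then |E| ≥ N² / 2^{K}. -/

import Mathlib

open scoped BigOperators

/-- Normalized Fourier transform on `(ℤ/Nℤ)²`:
`f̂(m) = N⁻¹ ∑ₓ f(x) e^{-2πi (x·m)/N}` where `x·m = x₁m₁ + x₂m₂`. -/
noncomputable def dft (N : ℕ) [NeZero N] (f : ZMod N × ZMod N → ℂ)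
    (m : ZMod N × ZMod N) : ℂ :=
  (N : ℂ)⁻¹ * ∑ x : ZMod N × ZMod N,
    f x * Complex.exp (-2 * Real.pi * Complex.I *
      (((x.1 * m.1 + x.2 * m.2).val : ℕ) : ℂ) / (N : ℂ))

/-- The parabola `Σ = {(t, t²) : t ∈ ℤ/Nℤ}` in `(ℤ/Nℤ)²`. -/
def parabola (N : ℕ) [NeZero N] : Finset (ZMod N × ZMod N) :=
  Finset.univ.image (fun t : ZMod N => (t, t ^ 2))

/-!
Write `f = ∑ₘ g(m) e(m·x/N)` with `g = N⁻¹ f̂`, supported on the parabola. Parseval gives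
`‖f‖₂² = N² ‖g‖₂²`, and since `f²` has Fourier coefficients `g ∗ g`, also `‖f‖₄⁴ = N² ‖g ∗ g‖₂²`.
A point of `(ℤ/Nℤ)²` is a sum of two points of the parabola in at most `2^ω(N)` ways: by the
Chinese remainder theorem this reduces to prime moduli, where `t₁ + t₂` and `t₁² + t₂²` determine
`{t₁, t₂}`. Cauchy–Schwarz on these representations gives `‖g ∗ g‖₂² ≤ 2^ω(N) ‖g‖₂⁴`, that is
`N² ‖f‖₄⁴ ≤ 2^ω(N) ‖f‖₂⁴`. Together with `‖f‖₂⁴ ≤ |supp f| ‖f‖₄⁴` this gives `|E| ≥ N² / 2^ω(N)`.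
-/

open Finset

section Counting

variable {R S T : Type*} [CommRing R] [Fintype R] [DecidableEq R]
  [CommRing S] [Fintype S] [DecidableEq S] [CommRing T] [Fintype T] [DecidableEq T]

def parabolaSumFiber (k : R × R) : Finset (R × R) :=
  {t | (t.1, t.1 ^ 2) + (t.2, t.2 ^ 2) = k}

lemma mem_parabolaSumFiber {k t : R × R} :
    t ∈ parabolaSumFiber k ↔ t.1 + t.2 = k.1 ∧ t.1 ^ 2 + t.2 ^ 2 = k.2 := by
  simp [parabolaSumFiber, Prod.ext_iff]

lemma injOn_fst_parabolaSumFiber (k : R × R) :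
    Set.InjOn Prod.fst (parabolaSumFiber k : Set (R × R)) := by
  intro t ht u hu h
  rw [mem_coe, mem_parabolaSumFiber] at ht hu
  exact Prod.ext h (by linear_combination ht.1 - hu.1 - h)

lemma card_parabolaSumFiber_le_card (k : R × R) :
    #(parabolaSumFiber k) ≤ Fintype.card R :=
  card_le_card_of_injOn Prod.fst (fun _ _ => mem_coe.2 (mem_univ _))
    (injOn_fst_parabolaSumFiber k)

lemma card_parabolaSumFiber_le_two [IsDomain R] (h2 : (2 : R) ≠ 0) (k : R × R) :
    #(parabolaSumFiber k) ≤ 2 := by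
  obtain ⟨t, ht⟩ | h := (parabolaSumFiber k).eq_empty_or_nonempty.symm
  · rw [mem_parabolaSumFiber] at ht
    have hsub : (parabolaSumFiber k).image Prod.fst ⊆ {t.1, t.2} := by
      intro z hz
      obtain ⟨u, hu, rfl⟩ := mem_image.1 hz
      rw [mem_parabolaSumFiber] at hu
      have key : 2 * ((u.1 - t.1) * (u.1 - t.2)) = 0 := by
        linear_combination (u.1 - u.2 - k.1) * hu.1 + (k.1 - 2 * u.1 + t.1 + t.2) * ht.1
          + hu.2 - ht.2
      rcases mul_eq_zero.1 ((mul_eq_zero.1 key).resolve_left h2) with h | h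
      · simp [sub_eq_zero.1 h]
      · simp [sub_eq_zero.1 h]
    calc #(parabolaSumFiber k)
        = #((parabolaSumFiber k).image Prod.fst) :=
          (card_image_of_injOn (injOn_fst_parabolaSumFiber k)).symm
      _ ≤ #{t.1, t.2} := card_le_card hsub
      _ ≤ 2 := card_le_two
  · simp [h]

lemma card_parabolaSumFiber_zmod_prime_le_two (p : ℕ) [Fact p.Prime] (k : ZMod p × ZMod p) :
    #(parabolaSumFiber k) ≤ 2 := by
  obtain rfl | hp := eq_or_ne p 2
  · exact card_parabolaSumFiber_le_card k
  · exact card_parabolaSumFiber_le_two (Ring.two_ne_zero (by rwa [ZMod.ringChar_zmod_n])) k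

lemma card_parabolaSumFiber_le_of_injective (χ : R →+* S) (hχ : Function.Injective χ)
    (k : R × R) : #(parabolaSumFiber k) ≤ #(parabolaSumFiber (χ k.1, χ k.2)) := by
  refine card_le_card_of_injOn (Prod.map χ χ) (fun t ht => ?_) (hχ.prodMap hχ).injOn
  rw [mem_coe, mem_parabolaSumFiber] at ht ⊢
  simp only [Prod.map_fst, Prod.map_snd, ← ht.1, ← ht.2, map_add, map_pow, and_self]

lemma card_parabolaSumFiber_prod_le (k : (S × T) × (S × T)) :
    #(parabolaSumFiber k) ≤
      #(parabolaSumFiber (k.1.1, k.2.1)) * #(parabolaSumFiber (k.1.2, k.2.2)) := by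
  rw [← card_product]
  refine card_le_card_of_injOn (fun t => ((t.1.1, t.2.1), (t.1.2, t.2.2))) (fun t ht => ?_) ?_
  · rw [mem_coe, mem_parabolaSumFiber] at ht
    simp only [mem_coe, mem_product, mem_parabolaSumFiber, ← ht.1, ← ht.2, Prod.fst_add,
      Prod.snd_add, Prod.pow_fst, Prod.pow_snd, and_self]
  · intro t _ u _ h
    simp only [Prod.mk.injEq] at h
    exact Prod.ext (Prod.ext h.1.1 h.2.1) (Prod.ext h.1.2 h.2.2)

lemma card_parabolaSumFiber_le_of_squarefree : ∀ {N : ℕ} [NeZero N], Squarefree N →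
    ∀ k : ZMod N × ZMod N, #(parabolaSumFiber k) ≤ 2 ^ N.primeFactors.card := by
  intro N
  induction N using Nat.recOnPosPrimePosCoprime with
  | zero => exact fun hN => absurd hN not_squarefree_zero
  | one => exact fun _ k => by simpa using card_parabolaSumFiber_le_card k
  | prime_pow p n hp hn =>
    intro _ hN k
    obtain rfl : n = 1 := ((Nat.squarefree_pow_iff hp.ne_one hn.ne').1 hN).2
    have : Fact p.Prime := ⟨hp⟩
    let e := ZMod.ringEquivCongr (pow_one p)
    calc #(parabolaSumFiber k)
        ≤ #(parabolaSumFiber (e k.1, e k.2)) :=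
          card_parabolaSumFiber_le_of_injective e.toRingHom e.injective k
      _ ≤ 2 ^ (p ^ 1).primeFactors.card := by
          simpa [hp] using card_parabolaSumFiber_zmod_prime_le_two p _
  | coprime a b ha hb hab iha ihb =>
    intro _ hN k
    have : NeZero a := ⟨by omega⟩
    have : NeZero b := ⟨by omega⟩
    obtain ⟨-, hsa, hsb⟩ := Nat.squarefree_mul_iff.1 hN
    let χ := ZMod.chineseRemainder hab
    calc #(parabolaSumFiber k)
        ≤ #(parabolaSumFiber (χ k.1, χ k.2)) :=
          card_parabolaSumFiber_le_of_injective χ.toRingHom χ.injective k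
      _ ≤ 2 ^ a.primeFactors.card * 2 ^ b.primeFactors.card :=
          (card_parabolaSumFiber_prod_le _).trans (Nat.mul_le_mul (iha hsa _) (ihb hsb _))
      _ = 2 ^ (a * b).primeFactors.card := by
          rw [hab.primeFactors_mul, card_union_of_disjoint hab.disjoint_primeFactors, pow_add]

end Counting

lemma mem_parabola {N : ℕ} [NeZero N] {m : ZMod N × ZMod N} :
    m ∈ parabola N ↔ m.2 = m.1 ^ 2 := by
  simp only [parabola, mem_image, mem_univ, true_and]
  exact ⟨fun ⟨t, ht⟩ => ht ▸ rfl, fun h => ⟨m.1, Prod.ext rfl h.symm⟩⟩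

lemma addConvolution_parabola_le {N : ℕ} [NeZero N] (k : ZMod N × ZMod N) :
    (parabola N).addConvolution (parabola N) k ≤ #(parabolaSumFiber k) := by
  rw [← card_add_eq]
  refine card_le_card_of_injOn (fun ab => (ab.1.1, ab.2.1)) (fun ab hab => ?_) ?_
  · simp only [coe_filter, mem_product, mem_parabola, Set.mem_ofPred_eq] at hab
    obtain ⟨⟨h1, h2⟩, rfl⟩ := hab
    simp [mem_parabolaSumFiber, h1, h2]
  · intro ab hab cd hcd h
    simp only [coe_filter, mem_product, mem_parabola, Set.mem_ofPred_eq] at hab hcd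
    simp only [Prod.mk.injEq] at h
    ext <;> simp [hab.1.1, hab.1.2, hcd.1.1, hcd.1.2, h.1, h.2]

section Convolution

variable {G : Type*} [Fintype G] [DecidableEq G]

def addConv [Add G] (g h : G → ℂ) (k : G) : ℂ :=
  ∑ p : G × G with p.1 + p.2 = k, g p.1 * h p.2

lemma sum_norm_sq_addConv_le [AddGroup G] {g : G → ℂ} {A : Finset G} (hg : ∀ a ∉ A, g a = 0)
    {B : ℕ} (hB : ∀ k, A.addConvolution A k ≤ B) :
    ∑ k, ‖addConv g g k‖ ^ 2 ≤ B * (∑ a, ‖g a‖ ^ 2) ^ 2 := by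
  set w : G × G → ℝ := fun p => ‖g p.1‖ * ‖g p.2‖
  have hsupp : ∀ k, addConv g g k = ∑ p ∈ A ×ˢ A with p.1 + p.2 = k, g p.1 * g p.2 := by
    intro k
    refine (sum_subset (filter_subset_filter _ (subset_univ _)) fun p hp hpA => ?_).symm
    simp only [mem_filter, mem_univ, true_and, mem_product] at hp hpA
    by_cases h1 : p.1 ∈ A
    · rw [hg p.2 fun h2 => hpA ⟨⟨h1, h2⟩, hp⟩, mul_zero]
    · rw [hg p.1 h1, zero_mul]
  have hpoint : ∀ k, ‖addConv g g k‖ ^ 2 ≤ B * ∑ p ∈ A ×ˢ A with p.1 + p.2 = k, w p ^ 2 := by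
    intro k
    calc ‖addConv g g k‖ ^ 2 ≤ (∑ p ∈ A ×ˢ A with p.1 + p.2 = k, w p) ^ 2 := by
          rw [hsupp]
          gcongr
          exact (norm_sum_le _ _).trans_eq (by simp [w])
      _ ≤ A.addConvolution A k * ∑ p ∈ A ×ˢ A with p.1 + p.2 = k, w p ^ 2 :=
          sq_sum_le_card_mul_sum_sq
      _ ≤ B * ∑ p ∈ A ×ˢ A with p.1 + p.2 = k, w p ^ 2 := by
          gcongr ?_ * _
          exact_mod_cast hB k
  calc ∑ k, ‖addConv g g k‖ ^ 2 ≤ ∑ k, B * ∑ p ∈ A ×ˢ A with p.1 + p.2 = k, w p ^ 2 :=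
        sum_le_sum fun k _ => hpoint k
    _ = B * ∑ p ∈ A ×ˢ A, w p ^ 2 := by rw [← mul_sum, sum_fiberwise]
    _ ≤ B * ∑ p : G × G, w p ^ 2 :=
        mul_le_mul_of_nonneg_left (sum_le_univ_sum_of_nonneg fun _ => sq_nonneg _) B.cast_nonneg
    _ = B * (∑ a, ‖g a‖ ^ 2) ^ 2 := by
        rw [sq (∑ a, _), sum_mul_sum, Fintype.sum_prod_type]
        simp only [w, mul_pow]

end Convolution

lemma sq_sum_le_ncard_mul_sum_sq {ι : Type*} [Fintype ι] {u : ι → ℝ} {E : Set ι}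
    (hu : ∀ x ∉ E, u x = 0) : (∑ x, u x) ^ 2 ≤ E.ncard * ∑ x, u x ^ 2 := by
  classical
  have hrestrict : ∀ v : ι → ℝ, (∀ x ∉ E, v x = 0) → ∑ x ∈ E.toFinset, v x = ∑ x, v x :=
    fun v hv => sum_subset (subset_univ _) fun x _ hx => hv x (by simpa using hx)
  rw [← hrestrict u hu, ← hrestrict (u · ^ 2) fun x hx => by simp [hu x hx],
    Set.ncard_eq_toFinset_card']
  exact sq_sum_le_card_mul_sum_sq

section Fourier

variable {N : ℕ} [NeZero N]

noncomputable def dotChar (m x : ZMod N × ZMod N) : ℂ :=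
  ZMod.stdAddChar (m.1 * x.1 + m.2 * x.2)

lemma dotChar_add_left (m m' x : ZMod N × ZMod N) :
    dotChar (m + m') x = dotChar m x * dotChar m' x := by
  rw [dotChar, dotChar, dotChar, ← AddChar.map_add_eq_mul]
  congr 1
  simp only [Prod.fst_add, Prod.snd_add]
  ring

lemma starRingEnd_dotChar (m x : ZMod N × ZMod N) :
    starRingEnd ℂ (dotChar m x) = dotChar (-m) x := by
  rw [dotChar, dotChar, ZMod.stdAddChar_apply, ← Circle.coe_inv_eq_conj, ← AddChar.map_neg_eq_inv,
    ← ZMod.stdAddChar_apply]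
  congr 1
  simp only [Prod.fst_neg, Prod.snd_neg]
  ring

lemma sum_dotChar (m : ZMod N × ZMod N) :
    ∑ x, dotChar m x = if m = 0 then (N : ℂ) ^ 2 else 0 := by
  have hsum : ∀ a : ZMod N, ∑ t, ZMod.stdAddChar (a * t) = if a = 0 then (N : ℂ) else 0 := by
    intro a
    split_ifs with h
    · simp [h]
    · exact AddChar.sum_eq_zero_of_ne_one (ZMod.isPrimitive_stdAddChar N h)
  simp_rw [dotChar, Fintype.sum_prod_type, AddChar.map_add_eq_mul, ← Finset.sum_mul_sum, hsum]
  obtain ⟨m₁, m₂⟩ := m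
  by_cases h₁ : m₁ = 0 <;> by_cases h₂ : m₂ = 0 <;> simp [h₁, h₂, sq]

lemma exp_neg_val_eq_stdAddChar (u : ZMod N) :
    Complex.exp (-2 * Real.pi * Complex.I * (u.val : ℂ) / N) = ZMod.stdAddChar (-u) := by
  have h := ZMod.stdAddChar_coe (N := N) (-(u.val : ℤ))
  rw [Int.cast_neg, Int.cast_natCast, ZMod.natCast_zmod_val] at h
  rw [h]
  push_cast
  ring_nf

lemma dft_eq_sum_dotChar (f : ZMod N × ZMod N → ℂ) (m : ZMod N × ZMod N) :
    dft N f m = (N : ℂ)⁻¹ * ∑ x, f x * dotChar (-m) x := by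
  simp only [dft, exp_neg_val_eq_stdAddChar, dotChar, Prod.fst_neg, Prod.snd_neg]
  congr 1
  refine Finset.sum_congr rfl fun x _ => ?_
  congr 2
  ring

noncomputable def fourierSum (g : ZMod N × ZMod N → ℂ) (x : ZMod N × ZMod N) : ℂ :=
  ∑ m, g m * dotChar m x

lemma fourierSum_dft (f : ZMod N × ZMod N → ℂ) :
    fourierSum (fun m => (N : ℂ)⁻¹ * dft N f m) = f := by
  have hN : (N : ℂ) ≠ 0 := NeZero.ne _
  funext x
  have hchar : ∀ m y, dotChar (-m) y * dotChar m x = dotChar (x - y) m := by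
    intro m y
    rw [dotChar, dotChar, dotChar, ← AddChar.map_add_eq_mul]
    congr 1
    simp only [Prod.fst_neg, Prod.snd_neg, Prod.fst_sub, Prod.snd_sub]
    ring
  calc fourierSum (fun m => (N : ℂ)⁻¹ * dft N f m) x
      = ((N : ℂ) ^ 2)⁻¹ * ∑ y, f y * ∑ m, dotChar (x - y) m := by
        simp_rw [fourierSum, dft_eq_sum_dotChar, Finset.mul_sum, Finset.sum_mul]
        rw [Finset.sum_comm]
        refine Finset.sum_congr rfl fun y _ => Finset.sum_congr rfl fun m _ => ?_
        rw [← hchar]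
        ring
    _ = f x := by
        simp_rw [sum_dotChar, sub_eq_zero, mul_ite, mul_zero, Finset.sum_ite_eq,
          Finset.mem_univ, if_true]
        field_simp

lemma sum_norm_sq_fourierSum (g : ZMod N × ZMod N → ℂ) :
    ∑ x, ‖fourierSum g x‖ ^ 2 = (N : ℝ) ^ 2 * ∑ m, ‖g m‖ ^ 2 := by
  apply Complex.ofReal_injective
  push_cast
  simp_rw [← Complex.mul_conj']
  calc ∑ x, fourierSum g x * starRingEnd ℂ (fourierSum g x)
      = ∑ m, ∑ m', g m * starRingEnd ℂ (g m') * ∑ x, dotChar (m + -m') x := by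
        simp_rw [fourierSum, map_sum, map_mul, starRingEnd_dotChar, Finset.sum_mul_sum,
          Finset.mul_sum, dotChar_add_left]
        rw [Finset.sum_comm]
        refine Finset.sum_congr rfl fun m _ => ?_
        rw [Finset.sum_comm]
        refine Finset.sum_congr rfl fun m' _ => Finset.sum_congr rfl fun x _ => ?_
        ring
    _ = (N : ℂ) ^ 2 * ∑ m, g m * starRingEnd ℂ (g m) := by
        simp_rw [sum_dotChar, ← sub_eq_add_neg, sub_eq_zero, mul_ite, mul_zero, Finset.sum_ite_eq,
          Finset.mem_univ, if_true, Finset.mul_sum]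
        exact Finset.sum_congr rfl fun m _ => by ring

lemma fourierSum_mul (g h : ZMod N × ZMod N → ℂ) (x : ZMod N × ZMod N) :
    fourierSum g x * fourierSum h x = fourierSum (addConv g h) x := by
  rw [fourierSum, fourierSum, Finset.sum_mul_sum, ← Fintype.sum_prod_type',
    ← Finset.sum_fiberwise Finset.univ (fun p => p.1 + p.2), fourierSum]
  simp_rw [addConv, Finset.sum_mul]
  refine Finset.sum_congr rfl fun k _ => Finset.sum_congr rfl fun p hp => ?_
  rw [(Finset.mem_filter.1 hp).2.symm, dotChar_add_left]
  ring

end Fourier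

theorem sum_norm_pow_four_le_of_dft_supported_parabola {N : ℕ} [NeZero N] (hN : Squarefree N)
    {f : ZMod N × ZMod N → ℂ} (hPar : ∀ m, m ∉ parabola N → dft N f m = 0) :
    (N : ℝ) ^ 2 * ∑ x, ‖f x‖ ^ 4 ≤ 2 ^ N.primeFactors.card * (∑ x, ‖f x‖ ^ 2) ^ 2 := by
  set g : ZMod N × ZMod N → ℂ := fun m => (N : ℂ)⁻¹ * dft N f m
  have hg : ∀ m ∉ parabola N, g m = 0 := fun m hm => by simp [g, hPar m hm]
  have hfg : fourierSum g = f := fourierSum_dft f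
  have hL2 : ∑ x, ‖f x‖ ^ 2 = (N : ℝ) ^ 2 * ∑ m, ‖g m‖ ^ 2 := hfg ▸ sum_norm_sq_fourierSum g
  have hL4 : ∑ x, ‖f x‖ ^ 4 = (N : ℝ) ^ 2 * ∑ k, ‖addConv g g k‖ ^ 2 := by
    rw [← sum_norm_sq_fourierSum]
    simp_rw [← fourierSum_mul, hfg, norm_mul, ← sq, ← pow_mul]
  have henergy : ∑ k, ‖addConv g g k‖ ^ 2 ≤ 2 ^ N.primeFactors.card * (∑ m, ‖g m‖ ^ 2) ^ 2 := by
    exact_mod_cast sum_norm_sq_addConv_le hg fun k =>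
      (addConvolution_parabola_le k).trans (card_parabolaSumFiber_le_of_squarefree hN k)
  rw [hL2, hL4]
  calc (N : ℝ) ^ 2 * ((N : ℝ) ^ 2 * ∑ k, ‖addConv g g k‖ ^ 2)
      ≤ (N : ℝ) ^ 4 * (2 ^ N.primeFactors.card * (∑ m, ‖g m‖ ^ 2) ^ 2) := by
        rw [← mul_assoc, ← pow_add]
        gcongr
    _ = _ := by ring

theorem uncertainty_bounded_factors (K : ℕ) (N : ℕ) [NeZero N] (hN : Squarefree N)
    (hω : N.primeFactors.card ≤ K)
    (f : ZMod N × ZMod N → ℂ) (E : Set (ZMod N × ZMod N))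
    (hf : f ≠ 0)
    (hE : ∀ x : ZMod N × ZMod N, x ∉ E → f x = 0)
    (hPar : ∀ m : ZMod N × ZMod N, m ∉ parabola N → dft N f m = 0) :
    (E.ncard : ℝ) ≥ (N : ℝ) ^ 2 / 2 ^ K := by
  set T := ∑ x, ‖f x‖ ^ 2
  have hT : 0 < T := by
    obtain ⟨x, hx⟩ := Function.ne_iff.1 hf
    exact sum_pos' (fun _ _ => by positivity) ⟨x, mem_univ _, by positivity⟩
  have hCS : T ^ 2 ≤ E.ncard * ∑ x, ‖f x‖ ^ 4 := by
    convert sq_sum_le_ncard_mul_sum_sq (E := E) (u := fun x => ‖f x‖ ^ 2)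
      (fun x hx => by simp [hE x hx]) using 3 with x
    ring
  have hrestr := sum_norm_pow_four_le_of_dft_supported_parabola hN hPar
  have hK : (2 : ℝ) ^ N.primeFactors.card ≤ 2 ^ K := pow_le_pow_right₀ one_le_two hω
  rw [ge_iff_le, div_le_iff₀ (by positivity)]
  refine le_of_mul_le_mul_right ?_ (pow_pos hT 2)
  calc (N : ℝ) ^ 2 * T ^ 2 ≤ E.ncard * ((N : ℝ) ^ 2 * ∑ x, ‖f x‖ ^ 4) := by
        rw [mul_left_comm]
        gcongr
    _ ≤ E.ncard * (2 ^ K * T ^ 2) :=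
        mul_le_mul_of_nonneg_left (hrestr.trans (by gcongr)) (by positivity)
    _ = E.ncard * 2 ^ K * T ^ 2 := by ring
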